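/- arXiv:2512.19128 — 2 statements merged into one kernel-verified Lean document; each statement's English description precedes it below -/
import Mathlib

section
/- Let α be a type and F = FreeGroup α. For subsets S, T ⊆ α, the intersection of the subgroups generated by the generators indexed by S and by T equals the subgroup generated by the generators indexed by S ∩ T; that is, Subgroup.closure (FreeGroup.of '' S) ⊓ Subgroup.closure (FreeGroup.of '' T) = Subgroup.closure (FreeGroup.of '' (S ∩ T)). -/
open Classical in
noncomputable def projGen (α : Type*) (S : Set α) : FreeGroup α →* FreeGroup α :=
  FreeGroup.lift (fun a => if a ∈ S then FreeGroup.of a else 1)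

open Classical in
theorem projGen_mem (α : Type*) (S : Set α) (x : FreeGroup α) :
    projGen α S x ∈ Subgroup.closure (FreeGroup.of '' S) := by
  induction x using FreeGroup.induction_on with
  | C1 => exact one_mem _
  | of a =>
    have h : projGen α S (FreeGroup.of a) = if a ∈ S then FreeGroup.of a else 1 :=
      FreeGroup.lift_apply_of
    rw [h]
    split_ifs with h
    · exact Subgroup.subset_closure ⟨a, h, rfl⟩
    · exact one_mem _
  | inv_of a ih => rw [map_inv]; exact inv_mem ih
  | mul a b iha ihb => rw [map_mul]; exact mul_mem iha ihb

open Classical in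
theorem projGen_fix (α : Type*) (S : Set α) (x : FreeGroup α)
    (hx : x ∈ Subgroup.closure (FreeGroup.of '' S)) : projGen α S x = x := by
  induction hx using Subgroup.closure_induction with
  | mem y hy =>
    obtain ⟨a, ha, rfl⟩ := hy
    simp [projGen, ha]
  | one => simp
  | mul y z _ _ ihy ihz => rw [map_mul, ihy, ihz]
  | inv y _ ihy => rw [map_inv, ihy]

open Classical in
theorem projGen_comp (α : Type*) (S T : Set α) :
    (projGen α S).comp (projGen α T) = projGen α (S ∩ T) := by
  apply FreeGroup.ext_hom
  intro a
  simp only [MonoidHom.comp_apply, projGen, FreeGroup.lift_apply_of]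
  by_cases hT : a ∈ T
  · simp only [hT, if_true, FreeGroup.lift_apply_of]
    by_cases hS : a ∈ S
    · simp [hS, hT]
    · simp [hS, fun h : a ∈ S ∩ T => hS h.1]
  · simp [hT, fun h : a ∈ S ∩ T => hT h.2]

theorem stmt_0 (α : Type*) (S T : Set α) :
    Subgroup.closure (FreeGroup.of '' S) ⊓ Subgroup.closure (FreeGroup.of '' T)
      = Subgroup.closure (FreeGroup.of '' (S ∩ T) : Set (FreeGroup α)) := by
  apply le_antisymm
  · rintro x ⟨hS, hT⟩
    have h1 : projGen α (S ∩ T) x = x := by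
      have := congrArg (fun f : FreeGroup α →* FreeGroup α => f x) (projGen_comp α S T)
      simp only [MonoidHom.comp_apply] at this
      rw [← this, projGen_fix α T x hT, projGen_fix α S x hS]
    rw [← h1]
    exact projGen_mem α (S ∩ T) x
  · exact le_inf
      (Subgroup.closure_mono (Set.image_mono Set.inter_subset_left))
      (Subgroup.closure_mono (Set.image_mono Set.inter_subset_right))
end

section
/- Let F be a group and let c and d be full decompositions of F (finite sets of nontrivial subgroups whose natural maps from the external free products to F are isomorphisms), with c ≠ d and c refining d (every element of c is contained in some element of d). Then the cardinality of c is strictly greater than the cardinality of d. -/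
/-- A full decomposition of `F`: a finite nonempty set of nontrivial subgroups
such that the canonical map from their external free product to `F` is an isomorphism. -/
def IsFullDecomp {F : Type*} [Group F] (c : Finset (Subgroup F)) : Prop :=
  c.Nonempty ∧ (∀ N ∈ c, N ≠ ⊥) ∧
    Function.Bijective
      (Monoid.CoprodI.lift (fun N : {N // N ∈ c} => (N : Subgroup F).subtype))

/-- Refinement relation on sets of subgroups. -/
def Refines {F : Type*} [Group F] (c d : Finset (Subgroup F)) : Prop :=
  ∀ A ∈ c, ∃ B ∈ d, A ≤ B

open Monoid in
lemma free_retraction {F : Type*} [Group F] (d : Finset (Subgroup F))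
    (hd : IsFullDecomp d) (B : Subgroup F) (hB : B ∈ d) :
    ∃ π : F →* B, (∀ x (hx : x ∈ B), π x = ⟨x, hx⟩) ∧
      (∀ B' ∈ d, B' ≠ B → ∀ x ∈ B', π x = 1) := by
  classical
  set L := Monoid.CoprodI.lift (fun N : {N // N ∈ d} => (N : Subgroup F).subtype) with hL
  let e : Monoid.CoprodI (fun N : {N // N ∈ d} => (N : Subgroup F)) ≃* F :=
    MulEquiv.ofBijective L hd.2.2
  let g : ∀ N : {N // N ∈ d}, (N : Subgroup F) →* B :=
    fun N => if h : (N : Subgroup F) = B then Subgroup.inclusion h.le else 1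
  refine ⟨(Monoid.CoprodI.lift g).comp e.symm.toMonoidHom, ?_, ?_⟩
  · intro x hx
    have hsymm : e.symm x = Monoid.CoprodI.of (i := ⟨B, hB⟩) ⟨x, hx⟩ := by
      rw [MulEquiv.symm_apply_eq]
      show x = e _
      rw [MulEquiv.ofBijective_apply (M := Monoid.CoprodI fun N : {N // N ∈ d} => (N : Subgroup F)) L hd.2.2, Monoid.CoprodI.lift_of]
      rfl
    simp only [MonoidHom.comp_apply, MulEquiv.toMonoidHom_eq_coe, MonoidHom.coe_coe, hsymm,
      Monoid.CoprodI.lift_of]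
    show g ⟨B, hB⟩ ⟨x, hx⟩ = _
    simp only [g, dif_pos rfl]
    rfl
  · intro B' hB' hne x hx
    have hsymm : e.symm x = Monoid.CoprodI.of (i := ⟨B', hB'⟩) ⟨x, hx⟩ := by
      rw [MulEquiv.symm_apply_eq]
      show x = e _
      rw [MulEquiv.ofBijective_apply (M := Monoid.CoprodI fun N : {N // N ∈ d} => (N : Subgroup F)) L hd.2.2, Monoid.CoprodI.lift_of]
      rfl
    simp only [MonoidHom.comp_apply, MulEquiv.toMonoidHom_eq_coe, MonoidHom.coe_coe, hsymm,
      Monoid.CoprodI.lift_of]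
    show g ⟨B', hB'⟩ ⟨x, hx⟩ = _
    simp only [g, dif_neg hne]
    rfl

theorem stmt_8 {F : Type*} [Group F] (c d : Finset (Subgroup F))
    (hc : IsFullDecomp c) (hd : IsFullDecomp d)
    (hne : c ≠ d) (hcd : Refines c d) : d.card < c.card := by
  classical
  choose f hf1 hf2 using hcd
  -- F is the supremum of the factors in c
  have htop : ∀ x : F, x ∈ ⨆ A : {A // A ∈ c}, (A : Subgroup F) := by
    intro x
    have hr : (Monoid.CoprodI.lift
        (fun N : {N // N ∈ c} => (N : Subgroup F).subtype)).range = ⊤ :=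
      MonoidHom.range_eq_top_of_surjective _ hc.2.2.surjective
    rw [Monoid.CoprodI.range_eq_iSup] at hr
    simp only [Subgroup.subtype_range] at hr
    rw [hr]; trivial
  -- key : each B ∈ d is sandwiched by the sup of its fiber
  have key : ∀ B (hB : B ∈ d),
      B ≤ ⨆ A : {A // A ∈ c}, ⨆ _ : f A.1 A.2 = B, (A : Subgroup F) := by
    intro B hB
    obtain ⟨π, hπ1, hπ2⟩ := free_retraction d hd B hB
    set S := ⨆ A : {A // A ∈ c}, ⨆ _ : f A.1 A.2 = B, (A.1 : Subgroup F) with hS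
    have hψ : ∀ x : F, (π x : F) ∈ S := by
      intro x
      have hx := htop x
      have hle : (⨆ A : {A // A ∈ c}, (A : Subgroup F)) ≤
          Subgroup.comap (B.subtype.comp π) S := by
        refine iSup_le fun A => fun y hy => ?_
        simp only [Subgroup.mem_comap, MonoidHom.comp_apply, Subgroup.coe_subtype]
        by_cases h : f A.1 A.2 = B
        · have hyB : y ∈ B := h ▸ hf2 A.1 A.2 hy
          rw [hπ1 y hyB]
          exact Subgroup.mem_iSup_of_mem A (Subgroup.mem_iSup_of_mem h hy)
        · rw [hπ2 (f A.1 A.2) (hf1 A.1 A.2) h y (hf2 A.1 A.2 hy)]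
          simp [OneMemClass.one_mem]
      exact hle hx
    intro b hb
    have := hψ b
    rwa [hπ1 b hb] at this
  -- the induced map on index sets is surjective
  have hfin : Fintype {A // A ∈ c} := inferInstance
  have hsurj : Function.Surjective
      (fun A : {A // A ∈ c} => (⟨f A.1 A.2, hf1 A.1 A.2⟩ : {B // B ∈ d})) := by
    rintro ⟨B, hB⟩
    by_contra hcon
    push_neg at hcon
    have hbot : (⨆ A : {A // A ∈ c}, ⨆ _ : f A.1 A.2 = B, (A.1 : Subgroup F)) = ⊥ := by
      refine le_bot_iff.1 (iSup_le fun A => iSup_le fun h => absurd ?_ (hcon A))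
      exact Subtype.ext h
    have := key B hB
    rw [hbot, le_bot_iff] at this
    exact hd.2.1 B hB this
  have hcard : d.card ≤ c.card := by
    have := Fintype.card_le_of_surjective _ hsurj
    simpa [Fintype.card_coe] using this
  rcases lt_or_eq_of_le hcard with h | h
  · exact h
  -- equal cards : the map is bijective, and then c = d, contradiction
  exfalso
  have hbij : Function.Bijective
      (fun A : {A // A ∈ c} => (⟨f A.1 A.2, hf1 A.1 A.2⟩ : {B // B ∈ d})) := by
    rw [Fintype.bijective_iff_surjective_and_card]
    refine ⟨hsurj, ?_⟩
    simp [Fintype.card_coe, h]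
  apply hne
  have hdc : d ⊆ c := by
    intro B hB
    obtain ⟨A, hA⟩ := hsurj ⟨B, hB⟩
    have hAB : f A.1 A.2 = B := congrArg Subtype.val hA
    have hBA : B = A.1 := by
      refine le_antisymm ?_ ?_
      · refine (key B hB).trans (iSup_le fun A' => iSup_le fun h' => ?_)
        have : A' = A := hbij.1 (by rw [hA]; exact Subtype.ext h')
        exact le_of_eq (congrArg Subtype.val this)
      · exact hAB ▸ hf2 A.1 A.2
    exact hBA ▸ A.2
  exact (Finset.eq_of_subset_of_card_le hdc h.ge).symm
end
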